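/- Let ω = exp(2πi/3), ℤ[ω] = {a + bω : a, b ∈ ℤ} ⊆ ℂ, P₀ = (2 + ω)·ℤ[ω], and P = ℤ[ω] \ P₀. Let Γ be an additive subgroup of finite index in ℤ[ω], and let f : ℂ → ℂ be a map of the form f(z) = (1 + ω)^j·z or f(z) = (1 + ω)^j·conj(z) for some j ∈ {0, 1, 2, 3, 4, 5}. Then the following are equivalent: (i) f maps every coset of Γ in ℤ[ω] onto a coset of Γ in ℤ[ω]; (ii) for every coset X of Γ with X ∩ P ≠ ∅ there exists a coset Y of Γ with f(X ∩ P) = Y ∩ P. (Since translations by elements of P₀ always permute the cosets of Γ and the classes X ∩ P, this shows the coloring of ℤ[ω] induced by Γ is chirally/fully perfect for the (3⁶) tiling if and only if the induced coloring of P is.) -/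

import Mathlib

/-- The primitive cube root of unity `ω = exp(2πi/3)`. -/
noncomputable def ω : ℂ := Complex.exp (2 * (Real.pi : ℂ) * Complex.I / 3)

/-- The Eisenstein integers `ℤ[ω]`, viewed as a subset of `ℂ`. -/
noncomputable def ZW : Set ℂ := {z : ℂ | ∃ a b : ℤ, z = (a : ℂ) + (b : ℂ) * ω}

/-- The ideal `P₀ = (2 + ω)·ℤ[ω]`, the set of vertices of the `(3⁶)` tiling. -/
noncomputable def P₀ : Set ℂ := {z : ℂ | ∃ y ∈ ZW, z = (2 + ω) * y}

/-- The cosets of a subset `Γ` in `ℤ[ω]`. -/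
noncomputable def cosets (Γ : Set ℂ) : Set (Set ℂ) :=
  {X : Set ℂ | ∃ t ∈ ZW, X = {z : ℂ | z - t ∈ Γ}}

/-!
Both conditions are equivalent to `f(Γ) = Γ`. The map `f` is an additive bijection of `ℂ`
which preserves `ℤ[ω]` and `P₀`, because `1 + ω` is a unit of `ℤ[ω]` and `P₀` is a
conjugation-stable ideal; hence `f(Γ) = Γ` gives `f(t + Γ) = f(t) + Γ` and
`f((t + Γ) ∩ P) = (f(t) + Γ) ∩ P`. Conversely, under (i) the coset `f(Γ)` contains `0`.
Under (ii), the point is that `Γ = (X ∩ P) - (X ∩ P)` for every coset `X` meeting `P`: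
for `x ∈ P` and `γ ∈ Γ` one of `x + γ`, `x - γ` lies in `P`, since `ℤ[ω]/P₀` has order 3.
The additive map `f` takes this difference set to that of `f(X ∩ P) = Y ∩ P`, which is `Γ`.
-/

open Complex ComplexConjugate Pointwise

theorem image_mul_left_eq_self {M : Type*} [Monoid M] {S : Set M} {u v : M} (huv : u * v = 1)
    (hu : ∀ z ∈ S, u * z ∈ S) (hv : ∀ z ∈ S, v * z ∈ S) : (u * ·) '' S = S := by
  refine Set.Subset.antisymm (Set.image_subset_iff.2 hu) fun z hz => ⟨v * z, hv z hz, ?_⟩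
  show u * (v * z) = z
  rw [← mul_assoc, huv, one_mul]

theorem image_conj_eq_self {S : Set ℂ} (h : ∀ z ∈ S, conj z ∈ S) : conj '' S = S :=
  Set.Subset.antisymm (Set.image_subset_iff.2 h) fun z hz => ⟨conj z, h z hz, conj_conj z⟩

section Cosets

variable {G : Type*} [AddCommGroup G] (H : AddSubgroup G)

theorem coset_eq_self {t : G} (ht : t ∈ H) : {z | z - t ∈ H} = (H : Set G) := by
  ext z; simp [sub_eq_add_neg, H.add_mem_cancel_right (H.neg_mem ht)]

theorem image_coset {f : G →+ G} (hf : f '' H = H) (t : G) :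
    f '' {z | z - t ∈ H} = {z | z - f t ∈ H} := by
  ext z; constructor
  · rintro ⟨x, hx, rfl⟩
    rw [Set.mem_ofPred_eq, ← map_sub, ← SetLike.mem_coe, ← hf]
    exact Set.mem_image_of_mem f hx
  · intro hz
    obtain ⟨δ, hδ, hfδ⟩ : z - f t ∈ f '' H := by rwa [hf]
    exact ⟨t + δ, by simpa using hδ, by rw [map_add, hfδ, add_sub_cancel]⟩

theorem forall_image_coset_iff {S : Set G} (f : G →+ G) (h0 : (0 : G) ∈ S)
    (hS : ∀ t ∈ S, f t ∈ S) :
    (∀ t ∈ S, ∃ t' ∈ S, f '' {z | z - t ∈ H} = {z | z - t' ∈ H}) ↔ f '' H = H := by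
  refine ⟨fun h => ?_, fun h t ht => ⟨f t, hS t ht, image_coset H h t⟩⟩
  obtain ⟨t', -, ht'⟩ := h 0 h0
  have hzero : (0 : G) ∈ {z | z - t' ∈ H} := ht' ▸ ⟨0, by simp, map_zero f⟩
  have ht'H : t' ∈ H := by simpa using hzero
  rwa [coset_eq_self H H.zero_mem, coset_eq_self H ht'H] at ht'

variable {H} {P : Set G}

theorem eq_coset_inter_sub_coset_inter (hP : ∀ x ∈ P, ∀ h ∈ H, x + h ∈ P ∨ x - h ∈ P) {t : G}
    (ht : ({z | z - t ∈ H} ∩ P).Nonempty) :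
    (H : Set G) = ({z | z - t ∈ H} ∩ P) - ({z | z - t ∈ H} ∩ P) := by
  obtain ⟨x, hxt, hxP⟩ := ht
  ext γ
  refine ⟨fun hγ => ?_, ?_⟩
  · rcases hP x hxP γ hγ with h | h
    · refine ⟨x + γ, ⟨?_, h⟩, x, ⟨hxt, hxP⟩, add_sub_cancel_left x γ⟩
      simpa [add_sub_right_comm] using H.add_mem hxt hγ
    · refine ⟨x, ⟨hxt, hxP⟩, x - γ, ⟨?_, h⟩, sub_sub_cancel x γ⟩
      simpa [sub_right_comm] using H.sub_mem hxt hγ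
  · rintro ⟨a, ⟨ha, -⟩, b, ⟨hb, -⟩, rfl⟩
    simpa using H.sub_mem ha hb

theorem forall_image_coset_inter_iff {S : Set G} (f : G →+ G) (hinj : Function.Injective f)
    (hS : ∀ t ∈ S, f t ∈ S) (hfP : f '' P = P) (hP : ∀ x ∈ P, ∀ h ∈ H, x + h ∈ P ∨ x - h ∈ P)
    {t₀ : G} (ht₀S : t₀ ∈ S) (ht₀ : ({z | z - t₀ ∈ H} ∩ P).Nonempty) :
    (∀ t ∈ S, ({z | z - t ∈ H} ∩ P).Nonempty →
      ∃ t' ∈ S, f '' ({z | z - t ∈ H} ∩ P) = {z | z - t' ∈ H} ∩ P) ↔ f '' H = H := by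
  refine ⟨fun h => ?_, fun h t ht _ => ⟨f t, hS t ht, ?_⟩⟩
  · obtain ⟨t', -, ht'⟩ := h t₀ ht₀S ht₀
    calc f '' H = f '' ({z | z - t₀ ∈ H} ∩ P) - f '' ({z | z - t₀ ∈ H} ∩ P) := by
          rw [← Set.image_sub, ← eq_coset_inter_sub_coset_inter hP ht₀]
      _ = H := by rw [ht', ← eq_coset_inter_sub_coset_inter hP (ht' ▸ ht₀.image f)]
  · rw [Set.image_inter hinj, image_coset H h, hfP]

end Cosets

theorem omega_eq : ω = -1 / 2 + (√3 / 2 : ℝ) * I := by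
  have h : 2 * (Real.pi : ℂ) * I / 3 = ((Real.pi - Real.pi / 3 : ℝ) : ℂ) * I := by
    push_cast; ring
  rw [ω, h, exp_mul_I, ← ofReal_cos, ← ofReal_sin, Real.cos_pi_sub, Real.sin_pi_sub,
    Real.cos_pi_div_three, Real.sin_pi_div_three]
  push_cast; ring

theorem omega_sq : ω ^ 2 = -1 - ω := by
  have h : ((√3 / 2 : ℝ) : ℂ) ^ 2 = 3 / 4 := by
    rw [← ofReal_pow, div_pow, Real.sq_sqrt (by norm_num)]; push_cast; ring
  rw [omega_eq]
  linear_combination (-1 : ℂ) * h + ((√3 / 2 : ℝ) : ℂ) ^ 2 * I_sq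

theorem conj_omega : conj ω = -1 - ω := by
  rw [omega_eq]; simp [map_ofNat]; ring

theorem omega_im_pos : 0 < ω.im := by
  simp [omega_eq]

theorem one_add_omega_mul_neg_omega : (1 + ω) * -ω = 1 := by
  linear_combination -omega_sq

theorem int_add_int_mul_omega_eq_zero {a b : ℤ} (h : (a : ℂ) + b * ω = 0) : a = 0 ∧ b = 0 := by
  have hb : b = 0 := by
    have him := congrArg im h
    simp only [add_im, intCast_im, mul_im, intCast_re, zero_mul, zero_add, add_zero,
      zero_im] at him
    exact_mod_cast (mul_eq_zero.mp him).resolve_right omega_im_pos.ne'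
  subst hb
  exact ⟨by simpa using h, rfl⟩

theorem zero_mem_ZW : (0 : ℂ) ∈ ZW := ⟨0, 0, by simp⟩

theorem one_mem_ZW : (1 : ℂ) ∈ ZW := ⟨1, 0, by simp⟩

theorem one_add_omega_mem_ZW : 1 + ω ∈ ZW := ⟨1, 1, by simp⟩

theorem neg_omega_mem_ZW : -ω ∈ ZW := ⟨0, -1, by simp⟩

theorem ZW_add {x y : ℂ} (hx : x ∈ ZW) (hy : y ∈ ZW) : x + y ∈ ZW := by
  obtain ⟨a, b, rfl⟩ := hx; obtain ⟨c, d, rfl⟩ := hy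
  exact ⟨a + c, b + d, by push_cast; ring⟩

theorem ZW_sub {x y : ℂ} (hx : x ∈ ZW) (hy : y ∈ ZW) : x - y ∈ ZW := by
  obtain ⟨a, b, rfl⟩ := hx; obtain ⟨c, d, rfl⟩ := hy
  exact ⟨a - c, b - d, by push_cast; ring⟩

theorem ZW_mul {x y : ℂ} (hx : x ∈ ZW) (hy : y ∈ ZW) : x * y ∈ ZW := by
  obtain ⟨a, b, rfl⟩ := hx; obtain ⟨c, d, rfl⟩ := hy
  exact ⟨a * c - b * d, a * d + b * c - b * d, by push_cast; linear_combination b * d * omega_sq⟩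

theorem ZW_pow {x : ℂ} (hx : x ∈ ZW) (n : ℕ) : x ^ n ∈ ZW := by
  induction n with
  | zero => simpa using one_mem_ZW
  | succ n ih => rw [pow_succ]; exact ZW_mul ih hx

theorem ZW_conj {x : ℂ} (hx : x ∈ ZW) : conj x ∈ ZW := by
  obtain ⟨a, b, rfl⟩ := hx
  exact ⟨a - b, -b, by simp [conj_omega]; ring⟩

theorem P₀_sub {x y : ℂ} (hx : x ∈ P₀) (hy : y ∈ P₀) : x - y ∈ P₀ := by
  obtain ⟨a, ha, rfl⟩ := hx; obtain ⟨b, hb, rfl⟩ := hy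
  exact ⟨a - b, ZW_sub ha hb, by ring⟩

theorem P₀_mul {x y : ℂ} (hx : x ∈ ZW) (hy : y ∈ P₀) : x * y ∈ P₀ := by
  obtain ⟨b, hb, rfl⟩ := hy
  exact ⟨x * b, ZW_mul hx hb, by ring⟩

theorem P₀_conj {x : ℂ} (hx : x ∈ P₀) : conj x ∈ P₀ := by
  obtain ⟨y, hy, rfl⟩ := hx
  refine ⟨-ω * conj y, ZW_mul neg_omega_mem_ZW (ZW_conj hy), ?_⟩
  rw [map_mul, map_add, conj_omega, map_ofNat]
  linear_combination conj y * omega_sq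

theorem three_mem_P₀ : (3 : ℂ) ∈ P₀ :=
  ⟨1 - ω, ⟨1, -1, by push_cast; ring⟩, by linear_combination omega_sq⟩

theorem one_not_mem_P₀ : (1 : ℂ) ∉ P₀ := by
  rintro ⟨_, ⟨a, b, rfl⟩, h⟩
  have h' : ((2 * a - b - 1 : ℤ) : ℂ) + ((a + b : ℤ) : ℂ) * ω = 0 := by
    push_cast; linear_combination -h - b * omega_sq
  obtain ⟨h1, h2⟩ := int_add_int_mul_omega_eq_zero h'
  omega

theorem add_mem_or_sub_mem_ZW_diff_P₀ {x h : ℂ} (hx : x ∈ ZW \ P₀) (hh : h ∈ ZW) :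
    x + h ∈ ZW \ P₀ ∨ x - h ∈ ZW \ P₀ := by
  by_contra hcon
  simp only [not_or, Set.mem_sdiff, not_and, not_not] at hcon
  have h3 : x * 3 - (x + h) - (x - h) ∈ P₀ :=
    P₀_sub (P₀_sub (P₀_mul hx.1 three_mem_P₀) (hcon.1 (ZW_add hx.1 hh)))
      (hcon.2 (ZW_sub hx.1 hh))
  exact hx.2 (by rwa [show x * 3 - (x + h) - (x - h) = x by ring] at h3)

def IsMulOrMulConj (u : ℂ) (f : ℂ → ℂ) : Prop :=
  (∀ z, f z = u * z) ∨ ∀ z, f z = u * conj z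

namespace IsMulOrMulConj

variable {u : ℂ} {f : ℂ → ℂ}

theorem map_add (hf : IsMulOrMulConj u f) (x y : ℂ) : f (x + y) = f x + f y := by
  rcases hf with h | h <;> simp only [h, _root_.map_add, mul_add]

theorem injective (hf : IsMulOrMulConj u f) (hu : u ≠ 0) : Function.Injective f := by
  rcases hf with h | h <;> intro x y hxy <;> rw [h, h] at hxy
  · exact mul_left_cancel₀ hu hxy
  · exact (starRingEnd ℂ).injective (mul_left_cancel₀ hu hxy)

theorem image_eq_self (hf : IsMulOrMulConj u f) {v : ℂ} (huv : u * v = 1) {S : Set ℂ}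
    (hconj : ∀ z ∈ S, conj z ∈ S) (hu : ∀ z ∈ S, u * z ∈ S) (hv : ∀ z ∈ S, v * z ∈ S) :
    f '' S = S := by
  rcases hf with h | h
  · rw [show f = (u * ·) from funext h, image_mul_left_eq_self huv hu hv]
  · rw [show f = (u * ·) ∘ conj from funext h, Set.image_comp, image_conj_eq_self hconj,
      image_mul_left_eq_self huv hu hv]

theorem image_eq_self_of_ideal {j : ℕ} (hf : IsMulOrMulConj ((1 + ω) ^ j) f) {S : Set ℂ}
    (hconj : ∀ z ∈ S, conj z ∈ S) (hmul : ∀ x ∈ ZW, ∀ z ∈ S, x * z ∈ S) : f '' S = S :=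
  hf.image_eq_self (by rw [← mul_pow, one_add_omega_mul_neg_omega, one_pow]) hconj
    (hmul _ (ZW_pow one_add_omega_mem_ZW j)) (hmul _ (ZW_pow neg_omega_mem_ZW j))

theorem injective_of_one_add_omega_pow {j : ℕ} (hf : IsMulOrMulConj ((1 + ω) ^ j) f) :
    Function.Injective f :=
  hf.injective (pow_ne_zero j (left_ne_zero_of_mul_eq_one one_add_omega_mul_neg_omega))

end IsMulOrMulConj

theorem stmt13 (Γ : Set ℂ) (h0 : (0 : ℂ) ∈ Γ)
    (hadd : ∀ x ∈ Γ, ∀ y ∈ Γ, x + y ∈ Γ) (hneg : ∀ x ∈ Γ, -x ∈ Γ)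
    (hΓZW : Γ ⊆ ZW)
    (f : ℂ → ℂ)
    (hf : ∃ j : ℕ, j ≤ 5 ∧
      ((∀ z, f z = (1 + ω) ^ j * z) ∨ (∀ z, f z = (1 + ω) ^ j * (starRingEnd ℂ) z))) :
    (∀ t ∈ ZW, ∃ t' ∈ ZW, f '' {z : ℂ | z - t ∈ Γ} = {z : ℂ | z - t' ∈ Γ}) ↔
    (∀ t ∈ ZW, ({z : ℂ | z - t ∈ Γ} ∩ (ZW \ P₀)).Nonempty →
      ∃ t' ∈ ZW,
        f '' ({z : ℂ | z - t ∈ Γ} ∩ (ZW \ P₀)) = {z : ℂ | z - t' ∈ Γ} ∩ (ZW \ P₀)) := by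
  obtain ⟨j, -, hf : IsMulOrMulConj ((1 + ω) ^ j) f⟩ := hf
  let H : AddSubgroup ℂ :=
    { carrier := Γ, add_mem' := fun ha hb => hadd _ ha _ hb, zero_mem' := h0
      neg_mem' := fun ha => hneg _ ha }
  let F : ℂ →+ ℂ := AddMonoidHom.mk' f hf.map_add
  have hinj : Function.Injective f := hf.injective_of_one_add_omega_pow
  have hZW : f '' ZW = ZW := hf.image_eq_self_of_ideal (fun _ => ZW_conj) fun _ hx _ => ZW_mul hx
  have hP₀ : f '' P₀ = P₀ := hf.image_eq_self_of_ideal (fun _ => P₀_conj) fun _ hx _ => P₀_mul hx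
  have hS : ∀ t ∈ ZW, F t ∈ ZW := fun t ht => hZW ▸ Set.mem_image_of_mem f ht
  exact (forall_image_coset_iff H F zero_mem_ZW hS).trans
    (forall_image_coset_inter_iff F hinj hS ((Set.image_sdiff hinj _ _).trans (by rw [hZW, hP₀]))
      (fun x hx γ hγ => add_mem_or_sub_mem_ZW_diff_P₀ hx (hΓZW hγ)) one_mem_ZW
      ⟨1, by simp, one_mem_ZW, one_not_mem_P₀⟩).symm
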